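/- Let ψ₀(t) = 8t(t²−1)/(t²+1)³, ζ₀(t) = 1/(t²+1), θ₀(t) = ∫_{t²}^∞ log(s+1)/(s(s+1)) ds. Then ∫₀^∞ ψ₀θ₀² dt = 8ζ(3) − 23/2, ∫₀^∞ ψ₀ζ₀θ₀² dt = (68/9)ζ(3) − 3517/324, and ∫₀^∞ ψ₀ζ₀²θ₀² dt = (62/9)ζ(3) − 51127/5184. -/

import Mathlib

open MeasureTheory Real

noncomputable def psi0 (t : ℝ) : ℝ := 8 * t * (t ^ 2 - 1) / (t ^ 2 + 1) ^ 3
noncomputable def zeta0 (t : ℝ) : ℝ := 1 / (t ^ 2 + 1)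
noncomputable def theta0 (t : ℝ) : ℝ :=
  ∫ s in Set.Ioi (t ^ 2), Real.log (s + 1) / (s * (s + 1))

/-- `ζ(3) = ∑_{n ≥ 1} 1/n³`. -/
noncomputable def zeta3 : ℝ := ∑' n : ℕ, 1 / ((n : ℝ) + 1) ^ 3

/-!
The substitution `u = (t² + 1)⁻¹` turns `θ₀(t)` into `theta u = ∫₀ᵘ -log v / (1 - v) dv` and
`ψ₀(t) ζ₀(t)ᵏ dt` into `(4 - 8u) uᵏ du`, so each integral is `∫₀¹ p(u) theta(u)² du` for a
polynomial `p`. Since `theta 0 = 0` and `theta' = -log u / (1 - u)`, two integrations by parts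
against polynomial primitives vanishing at the appropriate endpoints reduce it to the moments
`∫₀¹ uⁿ log u = -1/(n+1)²` and `∫₀¹ uⁿ log² u / (1 - u) = 2 (ζ(3) - ∑_{j<n} 1/(j+1)³)`.
The latter come from expanding `1/(1 - u)` as a geometric series and from the Gamma integral
`∫₀¹ uⁿ (-log u)ᵏ = k! / (n+1)^(k+1)`.
-/

open Set Filter Polynomial
open scoped Nat

lemma image_exp_neg_Ioi_zero : (fun x : ℝ => exp (-x)) '' Ioi 0 = Ioo 0 1 := by
  ext u
  constructor
  · rintro ⟨x, hx, rfl⟩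
    exact ⟨exp_pos _, exp_lt_one_iff.2 (neg_lt_zero.2 hx)⟩
  · rintro ⟨hu0, hu1⟩
    exact ⟨-log u, neg_pos.2 (log_neg hu0 hu1), by simp [exp_log hu0]⟩

lemma integral_Ioo_zero_one_eq_integral_exp_neg (g : ℝ → ℝ) :
    ∫ u in Ioo 0 1, g u = ∫ x in Ioi 0, exp (-x) * g (exp (-x)) := by
  rw [← image_exp_neg_Ioi_zero, integral_image_eq_integral_abs_deriv_smul measurableSet_Ioi
    (fun x _ => ((hasDerivAt_neg x).exp).hasDerivWithinAt)
    (fun _ _ _ _ h => neg_injective (exp_injective h))]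
  simp [abs_of_pos (exp_pos _)]

theorem integral_pow_mul_neg_log_pow (n k : ℕ) :
    ∫ u in Ioo 0 1, u ^ n * (-log u) ^ k = k ! / ((n : ℝ) + 1) ^ (k + 1) := by
  have hn : (0 : ℝ) < n + 1 := by positivity
  rw [integral_Ioo_zero_one_eq_integral_exp_neg]
  calc ∫ x in Ioi 0, exp (-x) * (exp (-x) ^ n * (-log (exp (-x))) ^ k)
      = ∫ x in Ioi 0, x ^ ((k + 1 : ℝ) - 1) * exp (-((n + 1) * x)) := by
        refine setIntegral_congr_fun measurableSet_Ioi fun x _ => ?_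
        rw [log_exp, neg_neg, add_sub_cancel_right, rpow_natCast, ← exp_nat_mul,
          show -((n + 1) * x) = -x + n * -x by ring, exp_add]
        ring
    _ = k ! / ((n : ℝ) + 1) ^ (k + 1) := by
        rw [integral_rpow_mul_exp_neg_mul_Ioi (by positivity) hn, Gamma_nat_eq_factorial,
          div_rpow zero_le_one hn.le, one_rpow, ← Nat.cast_add_one, ← Nat.cast_add_one,
          rpow_natCast]
        ring

theorem integrableOn_pow_mul_neg_log_pow (n k : ℕ) :
    IntegrableOn (fun u => u ^ n * (-log u) ^ k) (Ioo 0 1) :=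
  Integrable.of_integral_ne_zero (by rw [integral_pow_mul_neg_log_pow]; positivity)

theorem integrable_tsum_of_summable_integral_norm {α : Type*} [MeasurableSpace α]
    {μ : Measure α} {F : ℕ → α → ℝ} (hF : ∀ m, Integrable (F m) μ)
    (hs : Summable fun m => ∫ a, ‖F m a‖ ∂μ)
    (hm : AEStronglyMeasurable (fun a => ∑' m, F m a) μ) :
    Integrable (fun a => ∑' m, F m a) μ := by
  refine ⟨hm, ?_⟩
  have hfin : ∑' m, ∫⁻ a, ‖F m a‖ₑ ∂μ ≠ ⊤ := by
    simp_rw [← ofReal_integral_norm_eq_lintegral_enorm (hF _)]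
    rw [← ENNReal.ofReal_tsum_of_nonneg (fun m => integral_nonneg fun _ => norm_nonneg _) hs]
    exact ENNReal.ofReal_ne_top
  calc ∫⁻ a, ‖∑' m, F m a‖ₑ ∂μ ≤ ∫⁻ a, ∑' m, ‖F m a‖ₑ ∂μ :=
        lintegral_mono fun _ => enorm_tsum_le_tsum_enorm
    _ = ∑' m, ∫⁻ a, ‖F m a‖ₑ ∂μ := lintegral_tsum fun m => (hF m).aemeasurable.enorm
    _ < ⊤ := lt_top_iff_ne_top.2 hfin

theorem integrableOn_div_one_sub_and_hasSum {f : ℝ → ℝ}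
    (hf0 : ∀ u ∈ Ioo (0 : ℝ) 1, 0 ≤ f u)
    (hf : ∀ m : ℕ, IntegrableOn (fun u => u ^ m * f u) (Ioo 0 1))
    (hs : Summable fun m : ℕ => ∫ u in Ioo 0 1, u ^ m * f u) :
    IntegrableOn (fun u => f u / (1 - u)) (Ioo 0 1) ∧
      HasSum (fun m : ℕ => ∫ u in Ioo 0 1, u ^ m * f u) (∫ u in Ioo 0 1, f u / (1 - u)) := by
  have hgeom : ∀ u ∈ Ioo (0 : ℝ) 1, ∑' m : ℕ, u ^ m * f u = f u / (1 - u) := fun u hu => by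
    rw [tsum_mul_right, tsum_geometric_of_lt_one hu.1.le hu.2, inv_mul_eq_div]
  have hsumm : Summable fun m : ℕ => ∫ u in Ioo 0 1, ‖u ^ m * f u‖ := by
    refine hs.congr fun m => setIntegral_congr_fun measurableSet_Ioo fun u hu => ?_
    exact (norm_of_nonneg (mul_nonneg (pow_nonneg hu.1.le m) (hf0 u hu))).symm
  have hae : (fun u => ∑' m : ℕ, u ^ m * f u) =ᵐ[volume.restrict (Ioo 0 1)]
      fun u => f u / (1 - u) :=
    (ae_restrict_iff' measurableSet_Ioo).2 (ae_of_all _ hgeom)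
  have hmeas : AEStronglyMeasurable (fun u => f u / (1 - u)) (volume.restrict (Ioo 0 1)) :=
    ((by simpa using (hf 0).aemeasurable : AEMeasurable f _).div
      (by fun_prop : Measurable fun u : ℝ => 1 - u).aemeasurable).aestronglyMeasurable
  refine ⟨(integrable_tsum_of_summable_integral_norm hf hsumm (hmeas.congr hae.symm)).congr hae,
    ?_⟩
  rw [← integral_congr_ae hae]
  exact hasSum_integral_of_summable_integral_norm hf hsumm

theorem integrableOn_pow_mul_neg_log_pow_div_one_sub_and_hasSum (n : ℕ) {k : ℕ} (hk : 1 ≤ k) :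
    IntegrableOn (fun u => u ^ n * (-log u) ^ k / (1 - u)) (Ioo 0 1) ∧
      HasSum (fun m : ℕ => k ! / (((m + n : ℕ) : ℝ) + 1) ^ (k + 1))
        (∫ u in Ioo 0 1, u ^ n * (-log u) ^ k / (1 - u)) := by
  have hmoment : ∀ m : ℕ, ∫ u in Ioo 0 1, u ^ m * (u ^ n * (-log u) ^ k) =
      k ! / (((m + n : ℕ) : ℝ) + 1) ^ (k + 1) := fun m => by
    simp_rw [← mul_assoc, ← pow_add]
    exact integral_pow_mul_neg_log_pow (m + n) k
  have hsum : Summable fun m : ℕ => (k ! : ℝ) / (((m + n : ℕ) : ℝ) + 1) ^ (k + 1) := by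
    have h := (summable_nat_add_iff (n + 1)).2
      (Real.summable_one_div_nat_pow.2 (by omega : 1 < k + 1))
    exact (h.mul_left (k ! : ℝ)).congr fun m => by push_cast; ring
  simp_rw [← hmoment]
  refine integrableOn_div_one_sub_and_hasSum
    (fun u hu => mul_nonneg (pow_nonneg hu.1.le n)
      (pow_nonneg (neg_nonneg.2 (log_nonpos hu.1.le hu.2.le)) k))
    (fun m => ?_) (by simpa only [hmoment] using hsum)
  simp_rw [← mul_assoc, ← pow_add]
  exact integrableOn_pow_mul_neg_log_pow (m + n) k

lemma integrableOn_pow_mul_log (n : ℕ) : IntegrableOn (fun u => u ^ n * log u) (Ioo 0 1) := by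
  simpa using (integrableOn_pow_mul_neg_log_pow n 1).neg

lemma integral_pow_mul_log (n : ℕ) :
    ∫ u in Ioo 0 1, u ^ n * log u = -(1 / ((n : ℝ) + 1) ^ 2) := by
  have h := integral_pow_mul_neg_log_pow n 1
  simp only [pow_one, mul_neg, integral_neg, Nat.factorial_one, Nat.cast_one,
    one_add_one_eq_two] at h
  linarith

lemma integrableOn_neg_log_div_one_sub :
    IntegrableOn (fun u => -log u / (1 - u)) (Ioo 0 1) := by
  simpa using (integrableOn_pow_mul_neg_log_pow_div_one_sub_and_hasSum 0 le_rfl).1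

lemma integrableOn_pow_mul_log_sq_div_one_sub (n : ℕ) :
    IntegrableOn (fun u => u ^ n * (log u ^ 2 / (1 - u))) (Ioo 0 1) := by
  simpa [mul_div_assoc] using
    (integrableOn_pow_mul_neg_log_pow_div_one_sub_and_hasSum n one_le_two).1

lemma integral_pow_mul_log_sq_div_one_sub (n : ℕ) :
    ∫ u in Ioo 0 1, u ^ n * (log u ^ 2 / (1 - u)) =
      2 * (zeta3 - ∑ j ∈ Finset.range n, 1 / ((j : ℝ) + 1) ^ 3) := by
  have hzeta : HasSum (fun j : ℕ => 1 / ((j : ℝ) + 1) ^ 3) zeta3 :=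
    ((summable_nat_add_iff 1).2 (Real.summable_one_div_nat_pow.2 (by norm_num : 1 < 3))).congr
      (fun j => by push_cast; ring) |>.hasSum
  have h := (integrableOn_pow_mul_neg_log_pow_div_one_sub_and_hasSum n one_le_two).2
  simp only [neg_sq, mul_div_assoc, Nat.factorial_two] at h
  refine h.unique ?_
  simpa [div_eq_mul_one_div (2 : ℝ)] using ((hasSum_nat_add_iff' n).2 hzeta).mul_left 2

noncomputable def theta (u : ℝ) : ℝ := ∫ v in (0 : ℝ)..u, -log v / (1 - v)

lemma theta_zero : theta 0 = 0 := intervalIntegral.integral_same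

lemma continuousOn_theta : ContinuousOn theta (Icc 0 1) := by
  have h := intervalIntegral.continuousOn_primitive_interval (μ := volume) (a := 0) (b := 1)
    (f := fun v => -log v / (1 - v))
    (by rw [uIcc_of_le zero_le_one, integrableOn_Icc_iff_integrableOn_Ioo]
        exact integrableOn_neg_log_div_one_sub)
  rwa [uIcc_of_le zero_le_one] at h

lemma hasDerivAt_theta {u : ℝ} (hu : u ∈ Ioo (0 : ℝ) 1) :
    HasDerivAt theta (-log u / (1 - u)) u := by
  refine intervalIntegral.integral_hasDerivAt_right ?_
    (Measurable.stronglyMeasurable (by fun_prop)).stronglyMeasurableAtFilter ?_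
  · rw [intervalIntegrable_iff_integrableOn_Ioc_of_le hu.1.le]
    exact integrableOn_neg_log_div_one_sub.mono_set fun v hv => ⟨hv.1, hv.2.trans_lt hu.2⟩
  · have : 1 - u ≠ 0 := by linarith [hu.2]
    fun_prop (disch := first | exact this | exact hu.1.ne')

lemma image_inv_sub_one_Ioo {x : ℝ} (hx : 0 ≤ x) :
    (fun v : ℝ => v⁻¹ - 1) '' Ioo 0 (x + 1)⁻¹ = Ioi x := by
  rw [show (fun v : ℝ => v⁻¹ - 1) = (· - 1) ∘ Inv.inv from rfl, image_comp, image_inv_eq_inv,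
    inv_Ioo_0_left (by positivity), inv_inv, image_sub_const_Ioi, add_sub_cancel_right]

lemma theta0_eq_theta (t : ℝ) : theta0 t = theta (t ^ 2 + 1)⁻¹ := by
  rw [theta0, theta, intervalIntegral.integral_of_le (by positivity),
    integral_Ioc_eq_integral_Ioo, ← image_inv_sub_one_Ioo (sq_nonneg t),
    integral_image_eq_integral_abs_deriv_smul measurableSet_Ioo
      (fun v hv => ((hasDerivAt_inv hv.1.ne').sub_const 1).hasDerivWithinAt)
      (fun v _ w _ h => inv_injective (sub_left_injective h))]
  refine setIntegral_congr_fun measurableSet_Ioo fun v hv => ?_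
  have hv1 : v < 1 := hv.2.trans_le (inv_le_one_of_one_le₀ (by nlinarith))
  have : 1 - v ≠ 0 := by linarith
  have : v ≠ 0 := hv.1.ne'
  rw [smul_eq_mul, abs_neg, abs_inv, abs_of_pos (by positivity), sub_add_cancel, log_inv]
  field_simp

lemma image_inv_sq_add_one_Ioi_zero : (fun t : ℝ => (t ^ 2 + 1)⁻¹) '' Ioi 0 = Ioo 0 1 := by
  ext u
  constructor
  · rintro ⟨t, ht, rfl⟩
    exact ⟨by positivity, inv_lt_one_of_one_lt₀ (by nlinarith [mem_Ioi.1 ht])⟩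
  · rintro ⟨hu0, hu1⟩
    have h : 0 < u⁻¹ - 1 := sub_pos.2 (one_lt_inv₀ hu0 |>.2 hu1)
    exact ⟨√(u⁻¹ - 1), sqrt_pos.2 h, by simp [sq_sqrt h.le]⟩

lemma integral_Ioo_zero_one_eq_integral_inv_sq_add_one (g : ℝ → ℝ) :
    ∫ u in Ioo 0 1, g u = ∫ t in Ioi 0, 2 * t / (t ^ 2 + 1) ^ 2 * g (t ^ 2 + 1)⁻¹ := by
  have hderiv (t : ℝ) :
      HasDerivAt (fun t : ℝ => (t ^ 2 + 1)⁻¹) (-(2 * t / (t ^ 2 + 1) ^ 2)) t := by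
    refine (((hasDerivAt_pow 2 t).add_const 1).inv (by positivity)).congr_deriv ?_
    norm_num [neg_div]
  rw [← image_inv_sq_add_one_Ioi_zero, integral_image_eq_integral_abs_deriv_smul
    measurableSet_Ioi (fun t _ => (hderiv t).hasDerivWithinAt)
    (fun a ha b hb h => (pow_left_inj₀ (le_of_lt ha) (le_of_lt hb) two_ne_zero).1
      (add_right_cancel (inv_injective h)))]
  refine setIntegral_congr_fun measurableSet_Ioi fun t ht => ?_
  rw [smul_eq_mul, abs_neg, abs_of_nonneg (by have := mem_Ioi.1 ht; positivity)]

lemma integral_psi0_mul_zeta0_pow_mul_theta0_sq (k : ℕ) :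
    ∫ t in Ioi 0, psi0 t * zeta0 t ^ k * theta0 t ^ 2 =
      ∫ u in Ioo 0 1, ((C (4 : ℝ) - C 8 * X) * X ^ k).eval u * theta u ^ 2 := by
  rw [integral_Ioo_zero_one_eq_integral_inv_sq_add_one]
  refine setIntegral_congr_fun measurableSet_Ioi fun t _ => ?_
  rw [psi0, zeta0, theta0_eq_theta, one_div]
  simp only [eval_mul, eval_sub, eval_C, eval_X, eval_pow]
  field_simp
  ring

theorem integral_Ioo_mul_deriv_eq_deriv_mul {a b : ℝ} (hab : a ≤ b) {u v u' v' : ℝ → ℝ}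
    (hu : ContinuousOn u (Icc a b)) (hv : ContinuousOn v (Icc a b))
    (hu' : ∀ x ∈ Ioo a b, HasDerivAt u (u' x) x) (hv' : ∀ x ∈ Ioo a b, HasDerivAt v (v' x) x)
    (hiu : IntegrableOn u' (Ioo a b)) (hiv : IntegrableOn v' (Ioo a b)) :
    ∫ x in Ioo a b, u x * v' x = u b * v b - u a * v a - ∫ x in Ioo a b, u' x * v x := by
  have h := intervalIntegral.integral_mul_deriv_eq_deriv_mul_of_hasDerivAt
    (u := u) (v := v) (u' := u') (v' := v') (by rwa [uIcc_of_le hab]) (by rwa [uIcc_of_le hab])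
    (by simpa [hab] using hu') (by simpa [hab] using hv')
    ((intervalIntegrable_iff_integrableOn_Ioo_of_le hab).2 hiu)
    ((intervalIntegrable_iff_integrableOn_Ioo_of_le hab).2 hiv)
  simpa only [intervalIntegral.integral_of_le hab, integral_Ioc_eq_integral_Ioo] using h

lemma integral_eval_mul_theta_sq {p P R : ℝ[X]} (hP : derivative P = p)
    (hPR : P = (1 - X) * R) :
    ∫ u in Ioo 0 1, p.eval u * theta u ^ 2 =
      2 * ∫ u in Ioo 0 1, theta u * (R.eval u * log u) := by
  have h := integral_Ioo_mul_deriv_eq_deriv_mul zero_le_one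
    (u := fun x => P.eval x) (v := fun x => theta x ^ 2) (u' := fun x => p.eval x)
    (v' := fun x => 2 * theta x * (-log x / (1 - x)))
    P.continuous.continuousOn (continuousOn_theta.pow 2) (fun x _ => hP ▸ P.hasDerivAt x)
    (fun x hx => ((hasDerivAt_theta hx).pow 2).congr_deriv (by ring))
    (p.continuous.integrableOn_Icc.mono_set Ioo_subset_Icc_self)
    (integrableOn_neg_log_div_one_sub.continuousOn_mul_of_subset
      (continuousOn_const.mul continuousOn_theta) isCompact_Icc measurableSet_Ioo
      Ioo_subset_Icc_self)
  have hP1 : P.eval 1 = 0 := by simp [hPR]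
  have hpt : ∀ x ∈ Ioo (0 : ℝ) 1, P.eval x * (2 * theta x * (-log x / (1 - x))) =
      -2 * (theta x * (R.eval x * log x)) := fun x hx => by
    have : 1 - x ≠ 0 := by linarith [hx.2]
    rw [hPR, eval_mul, eval_sub, eval_one, eval_X]
    field_simp
  rw [setIntegral_congr_fun measurableSet_Ioo hpt, integral_const_mul, hP1, theta_zero] at h
  linarith

lemma integral_theta_mul_eval_mul_log {R A B S : ℝ[X]} (hA : derivative A = R)
    (hB : X * derivative B = -A) (hBS : B = (1 - X) * S) :
    ∫ u in Ioo 0 1, theta u * (R.eval u * log u) =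
      (∫ u in Ioo 0 1, A.eval u * (log u ^ 2 / (1 - u))) + ∫ u in Ioo 0 1, S.eval u * log u := by
  have hB' (x : ℝ) : x * (derivative B).eval x = -A.eval x := by
    simpa using congrArg (eval x) hB
  obtain ⟨A₁, hA₁⟩ : X ∣ A := X_dvd_iff.2 (by simpa [coeff_zero_eq_eval_zero] using hB' 0)
  have hQ : ContinuousOn (fun x => A.eval x * log x + B.eval x) (Icc 0 1) := by
    have : Continuous fun x => A₁.eval x * (x * log x) + B.eval x :=
      (A₁.continuous.mul continuous_mul_log).add B.continuous
    refine this.continuousOn.congr fun x _ => ?_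
    simp only [hA₁, eval_mul, eval_X]
    ring
  have hQ' : ∀ x ∈ Ioo (0 : ℝ) 1,
      HasDerivAt (fun x => A.eval x * log x + B.eval x) (R.eval x * log x) x := fun x hx => by
    refine (((A.hasDerivAt x).mul (hasDerivAt_log hx.1.ne')).add (B.hasDerivAt x)).congr_deriv ?_
    have hx0 : x ≠ 0 := hx.1.ne'
    rw [hA]
    field_simp
    linear_combination hB' x
  have hlog : IntegrableOn log (Ioo 0 1) := by simpa using integrableOn_pow_mul_log 0
  have hlog_sq : IntegrableOn (fun x => log x ^ 2 / (1 - x)) (Ioo 0 1) := by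
    simpa using integrableOn_pow_mul_log_sq_div_one_sub 0
  have h := integral_Ioo_mul_deriv_eq_deriv_mul zero_le_one continuousOn_theta hQ
    (fun x hx => hasDerivAt_theta hx) hQ' integrableOn_neg_log_div_one_sub
    (hlog.continuousOn_mul_of_subset R.continuous.continuousOn isCompact_Icc measurableSet_Ioo
      Ioo_subset_Icc_self)
  have hB1 : B.eval 1 = 0 := by simp [hBS]
  have hpt : ∀ x ∈ Ioo (0 : ℝ) 1, -log x / (1 - x) * (A.eval x * log x + B.eval x) =
      -(A.eval x * (log x ^ 2 / (1 - x)) + S.eval x * log x) := fun x hx => by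
    have : 1 - x ≠ 0 := by linarith [hx.2]
    rw [hBS, eval_mul, eval_sub, eval_one, eval_X]
    field_simp
  rw [setIntegral_congr_fun measurableSet_Ioo hpt, integral_neg,
    integral_add (hlog_sq.continuousOn_mul_of_subset A.continuous.continuousOn isCompact_Icc
      measurableSet_Ioo Ioo_subset_Icc_self)
    (hlog.continuousOn_mul_of_subset S.continuous.continuousOn isCompact_Icc
      measurableSet_Ioo Ioo_subset_Icc_self), theta_zero, hB1, log_one] at h
  simpa using h

lemma integral_eval_mul {s : Set ℝ} {g : ℝ → ℝ} (q : ℝ[X]) {N : ℕ}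
    (hN : q.natDegree < N) (hg : ∀ n : ℕ, IntegrableOn (fun u => u ^ n * g u) s) :
    ∫ u in s, q.eval u * g u = ∑ n ∈ Finset.range N, q.coeff n * ∫ u in s, u ^ n * g u := by
  simp_rw [eval_eq_sum_range' hN, Finset.sum_mul, mul_assoc]
  rw [integral_finsetSum _ fun n _ => (hg n).const_mul _]
  simp_rw [integral_const_mul]

-- Every `p` admits such `P, R, A, B, S`: `P = ∫₁ˣ p`, `R = P / (1 - X)`, `A = ∫₀ˣ R`,
-- `B = -∫₁ˣ A / X` and `S = B / (1 - X)`.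
theorem integral_eval_mul_theta_sq_eq_sum {p P R A B S : ℝ[X]} {N : ℕ}
    (hAN : A.natDegree < N) (hSN : S.natDegree < N) (hP : derivative P = p)
    (hPR : P = (1 - X) * R) (hA : derivative A = R) (hB : X * derivative B = -A)
    (hBS : B = (1 - X) * S) :
    ∫ u in Ioo 0 1, p.eval u * theta u ^ 2 =
      2 * ∑ n ∈ Finset.range N, (A.coeff n * (2 * (zeta3 - ∑ j ∈ Finset.range n,
        1 / ((j : ℝ) + 1) ^ 3)) - S.coeff n / ((n : ℝ) + 1) ^ 2) := by
  rw [integral_eval_mul_theta_sq hP hPR, integral_theta_mul_eval_mul_log hA hB hBS,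
    integral_eval_mul A hAN integrableOn_pow_mul_log_sq_div_one_sub,
    integral_eval_mul S hSN integrableOn_pow_mul_log, ← Finset.sum_add_distrib]
  simp only [integral_pow_mul_log_sq_div_one_sub, integral_pow_mul_log, mul_neg, mul_one_div,
    ← sub_eq_add_neg]

lemma integral_eval_mul_theta_sq_zero :
    ∫ u in Ioo 0 1, ((C (4 : ℝ) - C 8 * X) * X ^ 0).eval u * theta u ^ 2 =
      8 * zeta3 - 23 / 2 := by
  rw [integral_eval_mul_theta_sq_eq_sum (N := 3) (P := C 4 * X - C 4 * X ^ 2) (R := C 4 * X)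
    (A := C 2 * X ^ 2) (B := 1 - X ^ 2) (S := 1 + X)]
  · simp [Finset.sum_range_succ, coeff_X, coeff_X_pow, coeff_one]
    ring
  all_goals first | compute_degree! | exact Polynomial.funext fun x => by simp; ring

lemma integral_eval_mul_theta_sq_one :
    ∫ u in Ioo 0 1, ((C (4 : ℝ) - C 8 * X) * X ^ 1).eval u * theta u ^ 2 =
      68 / 9 * zeta3 - 3517 / 324 := by
  rw [integral_eval_mul_theta_sq_eq_sum (N := 4)
    (P := C (2 / 3) + C 2 * X ^ 2 - C (8 / 3) * X ^ 3)
    (R := C (2 / 3) + C (2 / 3) * X + C (8 / 3) * X ^ 2)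
    (A := C (2 / 3) * X + C (1 / 3) * X ^ 2 + C (8 / 9) * X ^ 3)
    (B := C (61 / 54) - C (2 / 3) * X - C (1 / 6) * X ^ 2 - C (8 / 27) * X ^ 3)
    (S := C (61 / 54) + C (25 / 54) * X + C (8 / 27) * X ^ 2)]
  · simp [Finset.sum_range_succ, coeff_X, coeff_X_pow, coeff_C]
    ring
  all_goals first | compute_degree! | exact Polynomial.funext fun x => by simp; ring

lemma integral_eval_mul_theta_sq_two :
    ∫ u in Ioo 0 1, ((C (4 : ℝ) - C 8 * X) * X ^ 2).eval u * theta u ^ 2 =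
      62 / 9 * zeta3 - 51127 / 5184 := by
  rw [integral_eval_mul_theta_sq_eq_sum (N := 5)
    (P := C (2 / 3) + C (4 / 3) * X ^ 3 - C 2 * X ^ 4)
    (R := C (2 / 3) + C (2 / 3) * X + C (2 / 3) * X ^ 2 + C 2 * X ^ 3)
    (A := C (2 / 3) * X + C (1 / 3) * X ^ 2 + C (2 / 9) * X ^ 3 + C (1 / 2) * X ^ 4)
    (B := C (223 / 216) - C (2 / 3) * X - C (1 / 6) * X ^ 2 - C (2 / 27) * X ^ 3
      - C (1 / 8) * X ^ 4)
    (S := C (223 / 216) + C (79 / 216) * X + C (43 / 216) * X ^ 2 + C (1 / 8) * X ^ 3)]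
  · simp [Finset.sum_range_succ, coeff_X, coeff_X_pow, coeff_C]
    ring
  all_goals first | compute_degree! | exact Polynomial.funext fun x => by simp; ring

theorem stmt12 :
    (∫ t in Set.Ioi (0 : ℝ), psi0 t * theta0 t ^ 2) = 8 * zeta3 - 23 / 2 ∧
    (∫ t in Set.Ioi (0 : ℝ), psi0 t * zeta0 t * theta0 t ^ 2)
      = 68 / 9 * zeta3 - 3517 / 324 ∧
    (∫ t in Set.Ioi (0 : ℝ), psi0 t * zeta0 t ^ 2 * theta0 t ^ 2)
      = 62 / 9 * zeta3 - 51127 / 5184 := by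
  have h := integral_psi0_mul_zeta0_pow_mul_theta0_sq
  refine ⟨?_, ?_, ?_⟩
  · simpa using (h 0).trans integral_eval_mul_theta_sq_zero
  · simpa using (h 1).trans integral_eval_mul_theta_sq_one
  · exact (h 2).trans integral_eval_mul_theta_sq_two
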